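/- Combined updatability theorem: a node n is updatable w.r.t. update type ut (per Definition 3) if and only if n satisfies U_ut := U_ut^1 ∧ U_ut^2. -/

import Mathlib

/-- Values of update/access annotations: `Y`, `N`, `[Q]`, `N_h`, `[Q]_h`,
where qualifiers are abstract node predicates. -/
inductive AnnValue (Node : Type) where
  | Y : AnnValue Node
  | N : AnnValue Node
  | Q : (Node → Prop) → AnnValue Node
  | Nh : AnnValue Node
  | Qh : (Node → Prop) → AnnValue Node

/-- An annotation value is valid at a node. -/
def AnnValue.validAt {Node : Type} : AnnValue Node → Node → Prop
  | .Y, _ => True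
  | .N, _ => False
  | .Q q, n => q n
  | .Nh, _ => False
  | .Qh q, n => q n

/-- The value is a downward-closed annotation that is invalid at the node carrying it. -/
def AnnValue.invalidDC {Node : Type} : AnnValue Node → Node → Prop
  | .Nh, _ => True
  | .Qh q, n => ¬ q n
  | _, _ => False

/-- A finite labeled rooted tree: nodes, labels, a parent function (none at the root),
and the (finite) ancestor-or-self list of each node, ordered from the node up to the root. -/
structure LTree (σ : Type) where
  Node : Type
  label : Node → σ
  parent : Node → Option Node
  ancSelf : Node → List Node
  ancSelf_eq : ∀ n, ancSelf n =
      n :: (match parent n with | none => [] | some p => ancSelf p)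

namespace LTree

variable {σ UT : Type}

/-- Does the label of `m` carry an annotation of type `ut`? -/
def hasAnnB (T : LTree σ) (ann : σ → UT → Option (AnnValue T.Node))
    (ut : UT) (m : T.Node) : Bool := (ann (T.label m) ut).isSome

/-- The annotation of type `ut` on the label of `m` exists and is valid at `m`. -/
def annValid (T : LTree σ) (ann : σ → UT → Option (AnnValue T.Node))
    (ut : UT) (m : T.Node) : Prop :=
  ∃ v, ann (T.label m) ut = some v ∧ v.validAt m

/-- Node `a` carries an invalid downward-closed annotation of type `ut`. -/
def annInvalidDC (T : LTree σ) (ann : σ → UT → Option (AnnValue T.Node))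
    (ut : UT) (a : T.Node) : Prop :=
  ∃ v, ann (T.label a) ut = some v ∧ v.invalidDC a

/-- The nearest ancestor-or-self of `n` carrying an annotation of type `ut`. -/
def nearestAnn (T : LTree σ) (ann : σ → UT → Option (AnnValue T.Node))
    (ut : UT) (n : T.Node) : Option T.Node :=
  (T.ancSelf n).find? (T.hasAnnB ann ut)

/-- Strict ancestors of `n`, ordered nearest first. -/
def strictAnc (T : LTree σ) (n : T.Node) : List T.Node := (T.ancSelf n).tail

/-- Definition 3: `n` is updatable w.r.t. `ut`: (i) the nearest ancestor-or-self
carrying an annotation of type `ut` exists and that annotation is valid at it, and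
(ii) no strict ancestor of `n` carries an invalid downward-closed annotation of type `ut`. -/
def updatable (T : LTree σ) (ann : σ → UT → Option (AnnValue T.Node))
    (ut : UT) (n : T.Node) : Prop :=
  (∃ m, T.nearestAnn ann ut n = some m ∧ T.annValid ann ut m) ∧
  (∀ a ∈ T.strictAnc n, ¬ T.annInvalidDC ann ut a)

/-- Updates of type `ut` are explicitly forbidden at `n` (conditions (a∨b) or (c)). -/
def forbidden (T : LTree σ) (ann : σ → UT → Option (AnnValue T.Node))
    (ut : UT) (n : T.Node) : Prop :=
  (∃ m, T.nearestAnn ann ut n = some m ∧ ¬ T.annValid ann ut m) ∨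
  (∃ a ∈ T.strictAnc n, T.annInvalidDC ann ut a)

end LTree

namespace AnnValue

theorem invalidDC_iff {Node : Type} (v : AnnValue Node) (n : Node) :
    v.invalidDC n ↔ v = .Nh ∨ ∃ q, v = .Qh q ∧ ¬ q n := by
  cases v <;> simp [invalidDC]

end AnnValue

namespace LTree

variable {σ UT : Type} (T : LTree σ) (ann : σ → UT → Option (AnnValue T.Node)) (ut : UT)

theorem nearestAnn_eq_head?_filter (n : T.Node) :
    T.nearestAnn ann ut n = ((T.ancSelf n).filter (T.hasAnnB ann ut)).head? :=
  List.head?_filter.symm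

theorem not_annInvalidDC_iff (a : T.Node) :
    ¬ T.annInvalidDC ann ut a ↔
      ann (T.label a) ut ≠ some .Nh ∧ ∀ q, ann (T.label a) ut = some (.Qh q) → q a := by
  simp only [annInvalidDC, AnnValue.invalidDC_iff]
  grind

theorem forall_not_annInvalidDC_iff (l : List T.Node) :
    (∀ a ∈ l, ¬ T.annInvalidDC ann ut a) ↔
      (∀ A : σ, ann A ut = some .Nh → ∀ a ∈ l, T.label a ≠ A) ∧
      (∀ (A : σ) (q : T.Node → Prop), ann A ut = some (.Qh q) →
        ∀ a ∈ l, T.label a = A → q a) := by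
  simp only [not_annInvalidDC_iff]
  constructor
  · intro h
    refine ⟨fun A hA a ha hlabel => (h a ha).1 (hlabel ▸ hA), ?_⟩
    rintro A q hA a ha rfl
    exact (h a ha).2 q hA
  · rintro ⟨hNh, hQh⟩ a ha
    exact ⟨fun hA => hNh _ hA a ha rfl, fun q hA => hQh _ q hA a ha rfl⟩

end LTree

/-- combined updatability theorem: `n` is updatable w.r.t. `ut`
(Definition 3) iff `n ⊨ U_ut^1 ∧ U_ut^2`. -/
theorem stmt11 (σ UT : Type) (T : LTree σ)
    (ann : σ → UT → Option (AnnValue T.Node)) (ut : UT) (n : T.Node) :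
    T.updatable ann ut n ↔
      ((∃ m, ((T.ancSelf n).filter (T.hasAnnB ann ut)).head? = some m ∧
          T.annValid ann ut m) ∧
       ((∀ A : σ, ann A ut = some AnnValue.Nh →
           ∀ a ∈ T.strictAnc n, T.label a ≠ A) ∧
        (∀ (A : σ) (q : T.Node → Prop), ann A ut = some (AnnValue.Qh q) →
           ∀ a ∈ T.strictAnc n, T.label a = A → q a))) := by
  rw [LTree.updatable, LTree.nearestAnn_eq_head?_filter, LTree.forall_not_annInvalidDC_iff]
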